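/- Let v be a smooth function on an open set S ⊂ ℝ² and λ a smooth function on S. Then div div(λ · cof ∇²v) = cof(∇²v) : ∇²λ, where M : N denotes the Frobenius inner product. -/

import Mathlib

/-- The second partial derivative `∂ᵢ∂ⱼ f` at `x`, via iterated Fréchet derivatives. -/
noncomputable def d2 (f : (Fin 2 → ℝ) → ℝ) (x : Fin 2 → ℝ) (i j : Fin 2) : ℝ :=
  fderiv ℝ (fun y => fderiv ℝ f y (Pi.single j 1)) x (Pi.single i 1)

/-- The Hessian matrix of `f : ℝ² → ℝ` at `x`. -/
noncomputable def hessian (f : (Fin 2 → ℝ) → ℝ) (x : Fin 2 → ℝ) :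
    Matrix (Fin 2) (Fin 2) ℝ :=
  fun i j => d2 f x i j

/-- The cofactor matrix of a 2×2 real matrix (transpose of the adjugate). -/
def cof (A : Matrix (Fin 2) (Fin 2) ℝ) : Matrix (Fin 2) (Fin 2) ℝ :=
  Matrix.transpose (Matrix.adjugate A)

noncomputable def d1 (f : (Fin 2 → ℝ) → ℝ) (x : Fin 2 → ℝ) (i : Fin 2) : ℝ :=
  fderiv ℝ f x (Pi.single i 1)

noncomputable def d3 (f : (Fin 2 → ℝ) → ℝ) (x : Fin 2 → ℝ) (i j k : Fin 2) : ℝ :=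
  d1 (fun y => d2 f y j k) x i

lemma d2_eq (f : (Fin 2 → ℝ) → ℝ) (x : Fin 2 → ℝ) (i j : Fin 2) :
    d2 f x i j = d1 (fun y => d1 f y j) x i := rfl

section
variable {S : Set (Fin 2 → ℝ)} {f g : (Fin 2 → ℝ) → ℝ} {x : Fin 2 → ℝ} {i j k : Fin 2}

lemma cdOn_d1 (hS : IsOpen S) (hf : ContDiffOn ℝ (⊤ : ℕ∞) f S) (k : Fin 2) :
    ContDiffOn ℝ (⊤ : ℕ∞) (fun y => d1 f y k) S :=
  (hf.fderiv_of_isOpen hS (by simp)).clm_apply contDiffOn_const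

lemma cdOn_d2 (hS : IsOpen S) (hf : ContDiffOn ℝ (⊤ : ℕ∞) f S) (j k : Fin 2) :
    ContDiffOn ℝ (⊤ : ℕ∞) (fun y => d2 f y j k) S :=
  cdOn_d1 hS (cdOn_d1 hS hf k) j

lemma dAt (hS : IsOpen S) (hx : x ∈ S) (hf : ContDiffOn ℝ (⊤ : ℕ∞) f S) :
    DifferentiableAt ℝ f x :=
  (hf.contDiffAt (hS.mem_nhds hx)).differentiableAt (by simp)

lemma d1_congr (hS : IsOpen S) (hx : x ∈ S) (h : ∀ y ∈ S, f y = g y) :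
    d1 f x i = d1 g x i := by
  unfold d1
  rw [Filter.EventuallyEq.fderiv_eq ?_]
  filter_upwards [hS.mem_nhds hx] with y hy using h y hy

lemma d1_mul (hf : DifferentiableAt ℝ f x) (hg : DifferentiableAt ℝ g x) :
    d1 (fun y => f y * g y) x k = d1 f x k * g x + f x * d1 g x k := by
  unfold d1
  rw [fderiv_fun_mul hf hg]
  simp
  ring

lemma d1_add (hf : DifferentiableAt ℝ f x) (hg : DifferentiableAt ℝ g x) :
    d1 (fun y => f y + g y) x k = d1 f x k + d1 g x k := by
  unfold d1
  rw [fderiv_fun_add hf hg]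
  simp

lemma d1_neg : d1 (fun y => -f y) x k = -(d1 f x k) := by
  unfold d1
  rw [fderiv_fun_neg]
  simp

lemma d2_neg : d2 (fun y => -f y) x i j = -(d2 f x i j) := by
  have h : (fun y => d1 (fun z => -f z) y j) = fun y => -(d1 f y j) :=
    funext fun y => d1_neg
  show d1 (fun y => d1 (fun z => -f z) y j) x i = _
  rw [h, d1_neg]
  rfl

lemma d2_symm (hf : ContDiffAt ℝ (⊤ : ℕ∞) f x) : d2 f x i j = d2 f x j i := by
  have h1 : DifferentiableAt ℝ (fderiv ℝ f) x :=
    (hf.fderiv_right (m := 1) (ENat.natCast_le_of_coe_top_le_withTop le_rfl (1 + 1))).differentiableAt one_ne_zero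
  have hb : ∀ a b : Fin 2,
      d2 f x a b = fderiv ℝ (fderiv ℝ f) x (Pi.single a 1) (Pi.single b 1) := by
    intro a b
    unfold d2
    rw [fderiv_clm_apply h1 (differentiableAt_const _)]
    simp
  rw [hb, hb]
  exact (hf.isSymmSndFDerivAt (by rw [minSmoothness_of_isRCLikeNormedField]; exact_mod_cast ENat.natCast_le_of_coe_top_le_withTop le_rfl 2)) _ _

lemma d3_swap12 (hS : IsOpen S) (hx : x ∈ S) (hf : ContDiffOn ℝ (⊤ : ℕ∞) f S) :
    d3 f x i j k = d3 f x j i k :=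
  d2_symm (f := fun y => d1 f y k) ((cdOn_d1 hS hf k).contDiffAt (hS.mem_nhds hx))

lemma d3_swap23 (hS : IsOpen S) (hx : x ∈ S) (hf : ContDiffOn ℝ (⊤ : ℕ∞) f S) :
    d3 f x i j k = d3 f x i k j :=
  d1_congr hS hx (fun y hy => d2_symm (hf.contDiffAt (hS.mem_nhds hy)))

lemma d2_mul (hS : IsOpen S) (hx : x ∈ S)
    (hf : ContDiffOn ℝ (⊤ : ℕ∞) f S) (hg : ContDiffOn ℝ (⊤ : ℕ∞) g S) :
    d2 (fun y => f y * g y) x i j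
      = d2 f x i j * g x + d1 f x j * d1 g x i + d1 f x i * d1 g x j
        + f x * d2 g x i j := by
  have hfj := dAt hS hx (cdOn_d1 hS hf j)
  have hgj := dAt hS hx (cdOn_d1 hS hg j)
  have hfx := dAt hS hx hf
  have hgx := dAt hS hx hg
  have h1 : d2 (fun y => f y * g y) x i j
      = d1 (fun y => d1 f y j * g y + f y * d1 g y j) x i := by
    rw [d2_eq]
    exact d1_congr hS hx (fun y hy => d1_mul (dAt hS hy hf) (dAt hS hy hg))
  rw [h1, d1_add (hfj.fun_mul hgx) (hfx.fun_mul hgj), d1_mul hfj hgx, d1_mul hfx hgj,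
    d2_eq f x i j, d2_eq g x i j]
  ring

end


theorem stmt_17 (S : Set (Fin 2 → ℝ)) (hSo : IsOpen S)
    (v lam : (Fin 2 → ℝ) → ℝ)
    (hv : ContDiffOn ℝ (⊤ : ℕ∞) v S) (hlam : ContDiffOn ℝ (⊤ : ℕ∞) lam S) :
    ∀ x ∈ S,
      ∑ i : Fin 2, ∑ j : Fin 2, d2 (fun y => lam y * cof (hessian v y) i j) x i j
        = ∑ i : Fin 2, ∑ j : Fin 2, cof (hessian v x) i j * d2 lam x i j := by
  intro x hx
  have hc00 : ∀ y, cof (hessian v y) 0 0 = d2 v y 1 1 := fun y => by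
    simp [cof, hessian, Matrix.adjugate_fin_two]
  have hc01 : ∀ y, cof (hessian v y) 0 1 = -(d2 v y 1 0) := fun y => by
    simp [cof, hessian, Matrix.adjugate_fin_two]
  have hc10 : ∀ y, cof (hessian v y) 1 0 = -(d2 v y 0 1) := fun y => by
    simp [cof, hessian, Matrix.adjugate_fin_two]
  have hc11 : ∀ y, cof (hessian v y) 1 1 = d2 v y 0 0 := fun y => by
    simp [cof, hessian, Matrix.adjugate_fin_two]
  simp only [Fin.sum_univ_two, hc00, hc01, hc10, hc11]
  -- expand the four product terms
  have e00 := d2_mul (i := 0) (j := 0) hSo hx hlam (cdOn_d2 hSo hv 1 1)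
  have e11 := d2_mul (i := 1) (j := 1) hSo hx hlam (cdOn_d2 hSo hv 0 0)
  have e01 := d2_mul (i := 0) (j := 1) hSo hx hlam ((cdOn_d2 hSo hv 1 0).neg)
  have e10 := d2_mul (i := 1) (j := 0) hSo hx hlam ((cdOn_d2 hSo hv 0 1).neg)
  simp only [d1_neg, d2_neg] at e01 e10
  rw [e00, e01, e10, e11]
  -- third derivative symmetries
  have sw12 : ∀ y ∈ S, ∀ i j k : Fin 2, d3 v y i j k = d3 v y j i k :=
    fun y hy i j k => d3_swap12 hSo hy hv
  have sw23 : ∀ y ∈ S, ∀ i j k : Fin 2, d3 v y i j k = d3 v y i k j :=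
    fun y hy i j k => d3_swap23 hSo hy hv
  have r1 : d1 (fun y => d2 v y 1 0) x 1 = d1 (fun y => d2 v y 1 1) x 0 := by
    show d3 v x 1 1 0 = d3 v x 0 1 1
    rw [sw23 x hx, sw12 x hx]
  have r2 : d1 (fun y => d2 v y 1 0) x 0 = d1 (fun y => d2 v y 0 0) x 1 := by
    show d3 v x 0 1 0 = d3 v x 1 0 0
    rw [sw12 x hx]
  have r3 : d1 (fun y => d2 v y 0 1) x 1 = d1 (fun y => d2 v y 1 1) x 0 := by
    show d3 v x 1 0 1 = d3 v x 0 1 1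
    rw [sw12 x hx]
  have r4 : d1 (fun y => d2 v y 0 1) x 0 = d1 (fun y => d2 v y 0 0) x 1 := by
    show d3 v x 0 0 1 = d3 v x 1 0 0
    rw [sw23 x hx, sw12 x hx]
  -- fourth derivative identities
  have E1 : d2 (fun y => d2 v y 1 1) x 0 0 = d2 (fun y => d2 v y 1 0) x 0 1 := by
    rw [d2_eq, d2_eq]
    apply d1_congr hSo hx
    intro y hy
    show d3 v y 0 1 1 = d3 v y 1 1 0
    rw [sw12 y hy, sw23 y hy]
  have E2 : d2 (fun y => d2 v y 0 0) x 1 1 = d2 (fun y => d2 v y 0 1) x 1 0 := by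
    rw [d2_eq, d2_eq]
    apply d1_congr hSo hx
    intro y hy
    show d3 v y 1 0 0 = d3 v y 0 0 1
    rw [sw12 y hy, sw23 y hy]
  rw [r1, r2, r3, r4, E1, E2]
  ring
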